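/- For every field k and every positive rational number r, there exists a finite-dimensional regular evolution k-algebra A such that |Aut(A)| / dim_k(A) = r, where Aut(A) is the group of k-algebra automorphisms of A. -/

import Mathlib

/-!
Take `A = k^N` with `e_i e_j = δ_ij C_i`, where `C_i` is the `i`-th row of `C = 1 + P` and `P`
is the adjacency matrix of a directed path through the last `N - n` basis vectors. Since `C` is
invertible, `xy = 0` iff the pointwise product of `x` and `y` vanishes, so an automorphism sends
the basis to vectors with pairwise disjoint supports: it is monomial, and comparing `φ(e_i²)` with
`φ(e_i)²` shows that it permutes the basis by a permutation preserving `C`. Such a permutation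
fixes the path and permutes the other `n` basis vectors freely, so `|Aut A| = n!`, and `n!/N`
takes every positive rational value with `N ≥ n + 2`.
-/

open Matrix

section CommSemiring

variable {ι R : Type*} [Fintype ι] [CommSemiring R] (C : Matrix ι ι R)

def evolutionMul (x y : ι → R) : ι → R := (x * y) ᵥ* C

lemma add_evolutionMul (x y z : ι → R) :
    evolutionMul C (x + y) z = evolutionMul C x z + evolutionMul C y z := by
  simp only [evolutionMul, add_mul, add_vecMul]

lemma evolutionMul_add (x y z : ι → R) :
    evolutionMul C x (y + z) = evolutionMul C x y + evolutionMul C x z := by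
  simp only [evolutionMul, mul_add, add_vecMul]

lemma smul_evolutionMul (c : R) (x y : ι → R) :
    evolutionMul C (c • x) y = c • evolutionMul C x y := by
  simp only [evolutionMul, smul_mul_assoc, smul_vecMul]

lemma evolutionMul_smul (c : R) (x y : ι → R) :
    evolutionMul C x (c • y) = c • evolutionMul C x y := by
  simp only [evolutionMul, mul_smul_comm, smul_vecMul]

lemma single_evolutionMul_single [DecidableEq ι] (i j : ι) :
    evolutionMul C (Pi.single i 1) (Pi.single j 1) = if i = j then C i else 0 := by
  split_ifs with hij
  · rw [evolutionMul, hij, ← Pi.single_mul, one_mul, single_one_vecMul, row]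
  · have hzero : (Pi.single i 1 * Pi.single j 1 : ι → R) = 0 := by
      ext l
      by_cases hl : l = i <;> simp [Pi.single_apply, hl, hij]
    rw [evolutionMul, hzero, zero_vecMul]

lemma funCongrLeft_evolutionMul {σ : Equiv.Perm ι} (hσ : ∀ i j, C (σ i) (σ j) = C i j)
    (x y : ι → R) :
    LinearEquiv.funCongrLeft R R σ (evolutionMul C x y) =
      evolutionMul C (LinearEquiv.funCongrLeft R R σ x) (LinearEquiv.funCongrLeft R R σ y) := by
  have hC : C.submatrix σ σ = C := Matrix.ext hσ
  change ((x * y) ᵥ* C) ∘ σ = (x ∘ σ * y ∘ σ) ᵥ* C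
  conv_rhs => rw [← hC, submatrix_vecMul_equiv]
  congr 2
  ext l
  simp

end CommSemiring

section Field

variable {ι k : Type*} [Fintype ι] [DecidableEq ι] [Field k]

theorem LinearEquiv.exists_perm_of_single_mul_single_eq_zero (φ : (ι → k) ≃ₗ[k] (ι → k))
    (hφ : ∀ i j, i ≠ j → φ (Pi.single i 1) * φ (Pi.single j 1) = 0) :
    ∃ (σ : Equiv.Perm ι) (c : ι → k), (∀ l, c l ≠ 0) ∧
      ∀ x l, φ x l = c l * x (σ l) := by
  set M : ι → ι → k := fun i l => φ (Pi.single i 1) l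
  have hexp : ∀ x l, φ x l = ∑ i, x i * M i l := by
    intro x l
    conv_lhs => rw [← Finset.univ_sum_single x]
    simp only [map_sum, Finset.sum_apply, M]
    refine Finset.sum_congr rfl fun i _ => ?_
    rw [← smul_eq_mul, ← Pi.smul_apply, ← map_smul, ← Pi.single_smul, smul_eq_mul, mul_one]
  have hcol : ∀ l, ∃ i, M i l ≠ 0 := by
    intro l
    by_contra! h
    simpa [hexp, h] using congr_fun (φ.apply_symm_apply (Pi.single l 1)) l
  choose σ hσ using hcol
  have hunique : ∀ i l, M i l ≠ 0 → i = σ l := by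
    intro i l hil
    by_contra hne
    exact mul_ne_zero hil (hσ l) (congr_fun (hφ i (σ l) hne) l)
  have hsurj : Function.Surjective σ := by
    intro i
    obtain ⟨l, hl⟩ : ∃ l, M i l ≠ 0 := by
      by_contra! h
      exact φ.map_ne_zero_iff.mpr (Pi.single_ne_zero_iff.mpr one_ne_zero) (funext h)
    exact ⟨l, (hunique i l hl).symm⟩
  refine ⟨Equiv.ofBijective σ (Finite.surjective_iff_bijective.mp hsurj), fun l => M (σ l) l,
    hσ, fun x l => ?_⟩
  rw [hexp, Finset.sum_eq_single (σ l), mul_comm]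
  · rfl
  · intro i _ hi
    rw [not_ne_iff.mp (mt (hunique i l) hi), mul_zero]
  · simp

variable {C : Matrix ι ι k}

lemma evolutionMul_eq_zero_iff (hC : IsUnit C) {x y : ι → k} :
    evolutionMul C x y = 0 ↔ x * y = 0 :=
  (vecMul_injective_iff_isUnit.mpr hC).eq_iff' (zero_vecMul C)

lemma span_evolutionMul_eq_top (hC : IsUnit C) :
    Submodule.span k {z | ∃ x y, z = evolutionMul C x y} = ⊤ := by
  refine Submodule.eq_top_iff'.mpr fun z => Submodule.subset_span ?_
  obtain ⟨x, rfl⟩ := vecMul_surjective_iff_isUnit.mpr hC z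
  exact ⟨x, 1, by rw [evolutionMul, mul_one]⟩

theorem exists_perm_of_map_evolutionMul (hC : IsUnit C) (hdiag : ∀ i, C i i = 1)
    (φ : (ι → k) ≃ₗ[k] (ι → k))
    (hφ : ∀ x y, φ (evolutionMul C x y) = evolutionMul C (φ x) (φ y)) :
    ∃ σ : Equiv.Perm ι, (∀ i j, C (σ i) (σ j) = C i j) ∧ ∀ x, φ x = x ∘ σ := by
  obtain ⟨σ, c, hc0, hφc⟩ := φ.exists_perm_of_single_mul_single_eq_zero fun i j hij => by
    rw [← evolutionMul_eq_zero_iff hC, ← hφ, single_evolutionMul_single, if_neg hij, map_zero]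
  have hφsingle : ∀ i, φ (Pi.single (σ i) 1) = Pi.single i (c i) := by
    intro i
    ext l
    by_cases hl : l = i <;> simp [hφc, hl, σ.injective.eq_iff]
  -- compare the coefficients of `φ (e_{σ i} ^ 2) = φ (e_{σ i}) ^ 2` at `j`
  have hsq : ∀ i j, c j * C (σ i) (σ j) = c i * c i * C i j := by
    intro i j
    have h := congr_fun (hφ (Pi.single (σ i) 1) (Pi.single (σ i) 1)) j
    rwa [single_evolutionMul_single, if_pos rfl, hφc, hφsingle, evolutionMul, ← Pi.single_mul,
      single_vecMul, Pi.smul_apply, smul_eq_mul, row] at h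
  have hc1 : ∀ i, c i = 1 := fun i =>
    mul_left_cancel₀ (hc0 i) (by simpa [hdiag] using (hsq i i).symm)
  refine ⟨σ, fun i j => by simpa [hc1] using hsq i j, fun x => funext fun l => ?_⟩
  rw [hφc, hc1, one_mul, Function.comp_apply]

theorem card_evolutionMul_aut (hC : IsUnit C) (hdiag : ∀ i, C i i = 1) :
    Nat.card {φ : (ι → k) ≃ₗ[k] (ι → k) //
        ∀ x y, φ (evolutionMul C x y) = evolutionMul C (φ x) (φ y)} =
      Nat.card {σ : Equiv.Perm ι // ∀ i j, C (σ i) (σ j) = C i j} := by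
  refine (Nat.card_eq_of_bijective (fun σ =>
    ⟨LinearEquiv.funCongrLeft k k σ.1, funCongrLeft_evolutionMul C σ.2⟩) ⟨?_, ?_⟩).symm
  · intro σ τ h
    have hcomp : ∀ x : ι → k, x ∘ σ.1 = x ∘ τ.1 := fun x => congrArg (fun φ => φ.1 x) h
    refine Subtype.ext (Equiv.ext fun l => ?_)
    by_contra hne
    simpa [Pi.single_apply, hne] using congr_fun (hcomp (Pi.single (τ.1 l) 1)) l
  · rintro ⟨φ, hφ⟩
    obtain ⟨σ, hσ, hφσ⟩ := exists_perm_of_map_evolutionMul hC hdiag φ hφ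
    exact ⟨⟨σ, hσ⟩, Subtype.ext (LinearEquiv.ext fun x => (hφσ x).symm)⟩

end Field

section Path

def pathAdj (n : ℕ) {N : ℕ} (i j : Fin N) : Prop := n ≤ (i : ℕ) ∧ (j : ℕ) = i + 1

instance (n N : ℕ) : DecidableRel (pathAdj n (N := N)) :=
  fun _ _ => inferInstanceAs (Decidable (_ ∧ _))

def pathMatrix (R : Type*) [Zero R] [One R] (n N : ℕ) : Matrix (Fin N) (Fin N) R :=
  fun i j => if i = j ∨ pathAdj n i j then 1 else 0

variable {R : Type*} {n N : ℕ}

lemma pathMatrix_self [Zero R] [One R] (i : Fin N) : pathMatrix R n N i i = 1 :=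
  if_pos (Or.inl rfl)

lemma isUnit_pathMatrix [CommRing R] : IsUnit (pathMatrix R n N) := by
  have hupper : (pathMatrix R n N).IsUpperTriangular := by
    intro i j hji
    rw [id, id, Fin.lt_def] at hji
    exact if_neg (by rintro (rfl | ⟨-, h⟩) <;> omega)
  rw [isUnit_iff_isUnit_det, det_of_isUpperTriangular hupper]
  simp [pathMatrix_self]

lemma pathMatrix_perm_iff [Zero R] [One R] [NeZero (1 : R)] (σ : Equiv.Perm (Fin N)) :
    (∀ i j, pathMatrix R n N (σ i) (σ j) = pathMatrix R n N i j) ↔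
      ∀ i j, pathAdj n (σ i) (σ j) ↔ pathAdj n i j := by
  refine forall₂_congr fun i j => ?_
  simp only [pathMatrix, σ.injective.eq_iff]
  by_cases hij : i = j
  · simp [hij, pathAdj]
  · split_ifs <;> simp_all

lemma pathAdj_perm_iff (hN : n + 2 ≤ N) (σ : Equiv.Perm (Fin N)) :
    (∀ i j, pathAdj n (σ i) (σ j) ↔ pathAdj n i j) ↔
      ∀ i : Fin N, ¬ (i : ℕ) < n → σ i = i := by
  constructor
  · intro hσ
    suffices h : ∀ d, ∀ i : Fin N, (i : ℕ) = n + d → σ i = i from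
      fun i hi => h (i - n) i (by omega)
    intro d
    induction d with
    | zero =>
      intro i hi
      have hstart : n ≤ (σ i : ℕ) :=
        ((hσ i ⟨n + 1, by omega⟩).mpr ⟨hi.ge, by simp [hi]⟩).1
      refine Fin.ext (le_antisymm ?_ (hi ▸ hstart))
      by_contra! hlt
      -- otherwise the start `σ i` of the path would have a predecessor
      obtain ⟨hpred₁, hpred₂⟩ :=
        (hσ (σ.symm ⟨σ i - 1, by omega⟩) i).mp (by simp [pathAdj]; omega)
      omega
    | succ d ih =>
      intro i hi
      have hprev := ih ⟨n + d, by omega⟩ rfl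
      have hstep := (hσ ⟨n + d, by omega⟩ i).mpr ⟨by simp, by simp [hi]; omega⟩
      rw [hprev] at hstep
      exact Fin.ext (by simp [pathAdj] at hstep; omega)
  · intro hfix
    have hfix' : ∀ i : Fin N, n ≤ (i : ℕ) → (σ i : ℕ) = i :=
      fun i hi => congrArg Fin.val (hfix i (by omega))
    -- the path is `σ`-invariant, since `σ` fixes it pointwise and is injective
    have hpath : ∀ i : Fin N, n ≤ (σ i : ℕ) → n ≤ i := fun i h => by
      by_contra! hi
      have := σ.injective (hfix (σ i) (by omega))
      omega
    intro i j
    have := hfix' i; have := hfix' j; have := hpath i; have := hpath j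
    simp only [pathAdj]
    omega

lemma card_perm_pathMatrix [Zero R] [One R] [NeZero (1 : R)] (hN : n + 2 ≤ N) :
    Nat.card {σ : Equiv.Perm (Fin N) //
        ∀ i j, pathMatrix R n N (σ i) (σ j) = pathMatrix R n N i j} =
      n.factorial := by
  rw [Nat.card_congr (Equiv.subtypeEquivRight fun σ =>
      (pathMatrix_perm_iff σ).trans (pathAdj_perm_iff hN σ)),
    ← Nat.card_congr (Equiv.Perm.subtypeEquivSubtypePerm fun i : Fin N => (i : ℕ) < n),
    Nat.card_perm, Nat.card_eq_fintype_card, Fintype.card_fin_lt_of_le (by omega)]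

end Path

lemma exists_factorial_div_eq {r : ℚ} (hr : 0 < r) :
    ∃ n N : ℕ, n + 2 ≤ N ∧ (n.factorial : ℚ) / N = r := by
  obtain ⟨s, hs⟩ : ∃ s : ℕ, r.num = s + 1 :=
    ⟨r.num.toNat - 1, by have := Rat.num_pos.mpr hr; omega⟩
  -- `(s + 3)! = (s + 1) * (s.factorial * (s + 2) * (s + 3))`
  refine ⟨s + 3, s.factorial * (s + 2) * (s + 3) * r.den, ?_, ?_⟩
  · have hpos : 1 ≤ s.factorial * r.den := Nat.mul_pos s.factorial_pos r.den_pos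
    nlinarith [Nat.mul_le_mul_right ((s + 2) * (s + 3)) hpos]
  · conv_rhs => rw [← Rat.num_div_den r, hs]
    push_cast [Nat.factorial_succ]
    field_simp
    ring

/-- For every field `k` and every positive rational `r`, there exists a
finite-dimensional regular evolution `k`-algebra `A` (a `k`-vector space with a
bilinear product admitting a basis `B` with `bᵢbⱼ = 0` for `i ≠ j`, and with
`A² = A`) such that `|Aut(A)| / dim_k A = r`, where `Aut(A)` is the group of
`k`-algebra automorphisms of `A`. -/
theorem exists_regular_evolution_algebra_aut_card_div_dim_eq
    (k : Type) [Field k] (r : ℚ) (hr : 0 < r) :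
    ∃ (A : Type) (_ : AddCommGroup A) (_ : Module k A) (_ : Mul A),
      (∀ a b c : A, (a + b) * c = a * c + b * c) ∧
      (∀ a b c : A, a * (b + c) = a * b + a * c) ∧
      (∀ (c : k) (a b : A), (c • a) * b = c • (a * b)) ∧
      (∀ (c : k) (a b : A), a * (c • b) = c • (a * b)) ∧
      FiniteDimensional k A ∧
      (∃ (ι : Type) (_ : Fintype ι) (B : Module.Basis ι k A),
        ∀ i j : ι, i ≠ j → B i * B j = 0) ∧
      Submodule.span k {x : A | ∃ a b : A, x = a * b} = ⊤ ∧
      (Nat.card {φ : A ≃ₗ[k] A // ∀ a b : A, φ (a * b) = φ a * φ b} : ℚ) /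
          (Module.finrank k A : ℚ) = r := by
  obtain ⟨n, N, hN, hratio⟩ := exists_factorial_div_eq hr
  let C := pathMatrix k n N
  refine ⟨Fin N → k, inferInstance, inferInstance, ⟨evolutionMul C⟩, add_evolutionMul C,
    evolutionMul_add C, smul_evolutionMul C, evolutionMul_smul C, inferInstance,
    ⟨Fin N, inferInstance, Pi.basisFun k (Fin N), fun i j hij => ?_⟩,
    span_evolutionMul_eq_top isUnit_pathMatrix, ?_⟩
  · simp only [Pi.basisFun_apply]
    exact (single_evolutionMul_single C i j).trans (if_neg hij)
  · erw [card_evolutionMul_aut isUnit_pathMatrix pathMatrix_self, card_perm_pathMatrix hN,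
      Module.finrank_fin_fun, hratio]
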